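/- arXiv:2107.13609 — 2 statements merged into one kernel-verified Lean document; each statement's English description precedes it below -/
import Mathlib

section
/- Let k have char(k) ≠ 2,3 and V_2 be 2-dimensional with basis {e_1,e_2}. Suppose (H1,H2) is a 2-partition of K_6^3 for which there exist five distinct vertices x,y,z,t,u in {1,...,6} with all six faces {x,y,z}, {x,y,t}, {x,z,t}, {y,z,u}, {y,t,u}, {z,t,u} in E(H1). Then the class of the associated basis tensor ω_{(H1,H2)} is zero in Λ^{S^3}_{V_2}[6]. -/
open scoped TensorProduct

/-- The index type: 3-element subsets of `{1,...,n}`, i.e. hyperedges of `K_n^3`. -/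
abbrev Tri (n : ℕ) := {S : Finset (Fin n) // S.card = 3}

/-- A family of entries is tetrahedrally degenerate if there are `x < y < z < t`
such that the entries on the four faces of the tetrahedron `{x,y,z,t}` coincide. -/
def tetraDeg {V : Type*} {n : ℕ} (v : Tri n → V) : Prop :=
  ∃ x y z t : Fin n, x < y ∧ y < z ∧ z < t ∧
    ∀ S₁ S₂ : Tri n, (S₁ : Finset (Fin n)) ⊆ {x, y, z, t} →
      (S₂ : Finset (Fin n)) ⊆ {x, y, z, t} → v S₁ = v S₂

/-- The subspace `E^{S^3}_V[n]` of `T^{S^3}_V[n] = V^{⊗ binom(n,3)}`. -/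
def Esub (k : Type*) {V : Type*} [Field k] [AddCommGroup V] [Module k V] (n : ℕ) :
    Submodule k (⨂[k] (_ : Tri n), V) :=
  Submodule.span k {w | ∃ v : Tri n → V, tetraDeg v ∧ w = PiTensorProduct.tprod k v}

/-!
Let `σ = {y,z,t}` be the face shared by the tetrahedra `{x,y,z,t}` and `{y,z,t,u}`; the tensor
`ω` carries `b 0` on all their other faces. Modulo `E`, a simple tensor vanishes once its entries
agree on the four faces of one tetrahedron. Put `c = b 0 + a • ω_σ` on the three faces of the
first tetrahedron other than `σ`: the tensor dies with `c` at `σ` (first tetrahedron) and with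
`b 0` at `σ` (second tetrahedron), so by linearity in the `σ` slot it dies with `ω_σ` at `σ`
whenever `a ≠ 0`. Expanding the three slots gives a cubic `P₀ + a P₁ + a² P₂ + a³ P₃` lying in `E`
for every `a ≠ 0`, with `P₃ ∈ E` (all four faces then carry `ω_σ`) and `P₀ = ω`. Evaluating at
`a = 1, -1, 2` isolates `3 P₀`, which is where `char k ≠ 2, 3` enters.
-/

open Finset Function

theorem natCast_ne_zero_of_ringChar_ne {k : Type*} [Field k] {p : ℕ} (hp : p.Prime)
    (h : ringChar k ≠ p) : (p : k) ≠ 0 := fun h0 => by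
  rcases (Nat.dvd_prime hp).1 ((ringChar.spec k p).1 h0) with h1 | h1
  exacts [CharP.ringChar_ne_one h1, h h1]

section
variable {k M ι : Type*} [Field k] [AddCommGroup M] [Module k M]

theorem Submodule.mem_of_forall_sum_powerset_pow_smul_mem (N : Submodule k M)
    (h2 : (2 : k) ≠ 0) (h3 : (3 : k) ≠ 0) {t : Finset ι} (ht : #t = 3) (R : Finset ι → M)
    (hRt : R t ∈ N) (hR : ∀ a : k, a ≠ 0 → ∑ s ∈ t.powerset, a ^ #s • R s ∈ N) :
    R ∅ ∈ N := by
  -- with `p a = ∑ a ^ #s • R s`, Lagrange interpolation of `p a - a ^ 3 • R t` at `1, -1, 2`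
  -- gives `3 • p 1 + p (-1) - p 2 + 6 • R t = 3 • R ∅`
  have hcomb : (3 : k) • ∑ s ∈ t.powerset, (1 : k) ^ #s • R s
      + ∑ s ∈ t.powerset, (-1 : k) ^ #s • R s - ∑ s ∈ t.powerset, (2 : k) ^ #s • R s
      = ∑ s ∈ t.powerset, (3 + (-1) ^ #s - 2 ^ #s : k) • R s := by
    simp only [smul_sum, ← sum_add_distrib, ← sum_sub_distrib, add_smul, sub_smul, one_pow,
      mul_one, smul_smul]
  have hvanish : ∑ s ∈ t.powerset, (3 + (-1) ^ #s - 2 ^ #s : k) • R s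
      = (3 : k) • R ∅ - (6 : k) • R t := by
    rw [sum_eq_add_of_mem ∅ t (empty_mem_powerset t) (mem_powerset_self t)
      (by rintro rfl; simp at ht)]
    · rw [ht, card_empty]; module
    · intro s hs ⟨hs0, hst⟩
      have hle : #s ≤ 3 := ht ▸ card_le_card (mem_powerset.1 hs)
      have h0 : #s ≠ 0 := by simpa using hs0
      have h3' : #s ≠ 3 := fun h => hst (eq_of_subset_of_card_le (mem_powerset.1 hs) (by omega))
      obtain h | h : #s = 1 ∨ #s = 2 := by omega
      all_goals rw [h]; norm_num
  have h3R : (3 : k) • R ∅ ∈ N := by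
    have := N.add_mem (N.sub_mem (N.add_mem (N.smul_mem 3 (hR 1 one_ne_zero))
      (hR (-1) (neg_ne_zero.2 one_ne_zero))) (hR 2 h2)) (N.smul_mem 6 hRt)
    rwa [hcomb, hvanish, sub_add_cancel] at this
  exact (N.smul_mem_iff h3).1 h3R
end

theorem MultilinearMap.map_piecewise_add_smul_const {R V M ι : Type*} [CommSemiring R]
    [AddCommMonoid V] [Module R V] [AddCommMonoid M] [Module R M] [DecidableEq ι]
    (f : MultilinearMap R (fun _ : ι => V) M) (m : ι → V) (y : V) (a : R) (t : Finset ι) :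
    f (t.piecewise (fun i => m i + a • y) m) =
      ∑ s ∈ t.powerset, a ^ #s • f (s.piecewise (fun _ => y) m) := by
  have hsplit : t.piecewise (fun i => m i + a • y) m = t.piecewise ((fun _ => a • y) + m) m :=
    t.piecewise_congr (fun i _ => add_comm _ _) (fun _ _ => rfl)
  rw [hsplit, f.map_piecewise_add]
  refine sum_congr rfl fun s _ => ?_
  have hscale : s.piecewise (fun _ => a • y) m
      = s.piecewise (fun i => a • s.piecewise (fun _ => y) m i) (s.piecewise (fun _ => y) m) :=
    s.piecewise_congr (fun i hi => by rw [piecewise_eq_of_mem _ _ _ hi])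
      (fun i hi => by rw [piecewise_eq_of_notMem _ _ _ hi])
  rw [hscale, f.map_piecewise_smul, prod_const]

section
variable {k V M ι : Type*} [Field k] [AddCommGroup V] [Module k V] [AddCommGroup M] [Module k M]
  [DecidableEq ι]

theorem MultilinearMap.map_mem_of_forall_const_on_two_blocks
    (f : MultilinearMap k (fun _ : ι => V) M) (N : Submodule k M)
    (h2 : (2 : k) ≠ 0) (h3 : (3 : k) ≠ 0) {T T' : Finset ι} {σ : ι}
    (hT : #T = 4) (hσ : σ ∈ T) (hTT' : T ∩ T' ⊆ {σ})
    (hfT : ∀ (c : V) (w : ι → V), (∀ i ∈ T, w i = c) → f w ∈ N)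
    (hfT' : ∀ (c : V) (w : ι → V), (∀ i ∈ T', w i = c) → f w ∈ N)
    {v : ι → V} {e : V} (hv : ∀ i ∈ T ∪ T', i ≠ σ → v i = e) : f v ∈ N := by
  set F := T.erase σ
  have hF : #F = 3 := by rw [card_erase_of_mem hσ, hT]
  have hσF : σ ∉ F := notMem_erase σ T
  have hFT' : ∀ i ∈ F, i ∉ T' := fun i hi hi' =>
    ne_of_mem_erase hi (mem_singleton.1 (hTT' (mem_inter.2 ⟨mem_of_mem_erase hi, hi'⟩)))
  have hFe : ∀ i ∈ F, v i = e := fun i hi =>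
    hv i (mem_union_left _ (mem_of_mem_erase hi)) (ne_of_mem_erase hi)
  have hmemT' : ∀ c, f (update (F.piecewise (fun _ => c) v) σ e) ∈ N := fun c =>
    hfT' e _ fun i hi => by
      rcases eq_or_ne i σ with rfl | hiσ
      · exact update_self ..
      · rw [update_of_ne hiσ, piecewise_eq_of_notMem _ _ _ fun hiF => hFT' i hiF hi]
        exact hv i (mem_union_right _ hi) hiσ
  have hmemT : ∀ c, f (update (F.piecewise (fun _ => c) v) σ c) ∈ N := fun c =>
    hfT c _ fun i hi => by
      rcases eq_or_ne i σ with rfl | hiσ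
      · exact update_self ..
      · rw [update_of_ne hiσ, piecewise_eq_of_mem _ _ _ (mem_erase.2 ⟨hiσ, hi⟩)]
  have hline : ∀ a : k, a ≠ 0 → f (F.piecewise (fun _ => e + a • v σ) v) ∈ N := by
    intro a ha
    set g := F.piecewise (fun _ => e + a • v σ) v
    have hgσ : update g σ (v σ) = g := by
      rw [update_eq_self_iff]; exact (piecewise_eq_of_notMem _ _ _ hσF).symm
    have hsplit := f.map_update_add g σ e (a • v σ)
    rw [f.map_update_smul, hgσ] at hsplit
    refine (N.smul_mem_iff ha).1 ?_
    have := N.sub_mem (hmemT (e + a • v σ)) (hmemT' (e + a • v σ))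
    rwa [hsplit, add_sub_cancel_left] at this
  refine N.mem_of_forall_sum_powerset_pow_smul_mem h2 h3 hF
    (fun s => f (s.piecewise (fun _ => v σ) v)) ?_ ?_
  · exact hfT (v σ) _ fun i hi => by
      rcases eq_or_ne i σ with rfl | hiσ
      · exact piecewise_eq_of_notMem _ _ _ hσF
      · exact piecewise_eq_of_mem _ _ _ (mem_erase.2 ⟨hiσ, hi⟩)
  · intro a ha
    have hline' : F.piecewise (fun _ => e + a • v σ) v = F.piecewise (fun i => v i + a • v σ) v :=
      F.piecewise_congr (fun i hi => by rw [hFe i hi]) fun _ _ => rfl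
    rw [← f.map_piecewise_add_smul_const, ← hline']
    exact hline a ha
end

namespace Tri
variable {n : ℕ}

def faces (D : Finset (Fin n)) : Finset (Tri n) := (D.powersetCard 3).subtype (·.card = 3)

@[simp]
theorem mem_faces {D : Finset (Fin n)} {S : Tri n} : S ∈ faces D ↔ (S : Finset (Fin n)) ⊆ D := by
  simp [faces, mem_powersetCard, S.2]

theorem card_faces (D : Finset (Fin n)) : #(faces D) = (#D).choose 3 := by
  rw [faces, card_subtype, filter_true_of_mem fun S hS => (mem_powersetCard.1 hS).2,
    card_powersetCard]

theorem faces_inter_faces_subset {D D' : Finset (Fin n)} (σ : Tri n)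
    (h : D ∩ D' ⊆ σ) : faces D ∩ faces D' ⊆ {σ} := fun S hS => by
  rw [mem_inter, mem_faces, mem_faces] at hS
  exact mem_singleton.2 <| Subtype.ext <|
    eq_of_subset_of_card_le (subset_inter hS.1 hS.2 |>.trans h) (by rw [S.2, σ.2])

theorem exists_eq_erase_of_mem_faces {D : Finset (Fin n)} (hD : #D = 4) {S : Tri n}
    (hS : S ∈ faces D) : ∃ m ∈ D, (S : Finset (Fin n)) = D.erase m := by
  obtain ⟨m, hmS, rfl⟩ := exists_eq_insert_iff.2 ⟨mem_faces.1 hS, by rw [S.2, hD]⟩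
  exact ⟨m, mem_insert_self m _, (erase_insert hmS).symm⟩

theorem coe_eq_of_mem_faces {p q r s : Fin n} (hpq : p ≠ q) (hpr : p ≠ r)
    (hps : p ≠ s) (hqr : q ≠ r) (hqs : q ≠ s) (hrs : r ≠ s) {S : Tri n}
    (hS : S ∈ faces {p, q, r, s}) :
    (S : Finset (Fin n)) = {q, r, s} ∨ (S : Finset (Fin n)) = {p, r, s} ∨
      (S : Finset (Fin n)) = {p, q, s} ∨ (S : Finset (Fin n)) = {p, q, r} := by
  obtain ⟨m, hm, hSm⟩ := exists_eq_erase_of_mem_faces (by simp [*]) hS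
  simp only [mem_insert, mem_singleton] at hm
  rcases hm with rfl | rfl | rfl | rfl <;>
    simp [erase_insert_of_ne, *] at hSm ⊢

end Tri

theorem tprod_mem_Esub_of_forall_faces {k V : Type*} [Field k] [AddCommGroup V] [Module k V]
    {n : ℕ} {D : Finset (Fin n)} (hD : #D = 4) (c : V) (w : Tri n → V)
    (hw : ∀ S ∈ Tri.faces D, w S = c) : PiTensorProduct.tprod k w ∈ Esub k n := by
  set f := D.orderEmbOfFin hD
  have hsub : ({f 0, f 1, f 2, f 3} : Finset (Fin n)) ⊆ D := by
    simp [insert_subset_iff, f, orderEmbOfFin_mem]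
  refine Submodule.subset_span ⟨w, ⟨f 0, f 1, f 2, f 3, f.strictMono (by decide),
    f.strictMono (by decide), f.strictMono (by decide), fun S₁ S₂ h₁ h₂ => ?_⟩, rfl⟩
  rw [hw S₁ (Tri.mem_faces.2 (h₁.trans hsub)), hw S₂ (Tri.mem_faces.2 (h₂.trans hsub))]

/-- If a 2-partition `(H1,H2)` of `K_6^3` (with `A` the hyperedge set of `H1`) has,
for some five distinct vertices `x,y,z,t,u`, all six faces `{x,y,z}`, `{x,y,t}`,
`{x,z,t}`, `{y,z,u}`, `{y,t,u}`, `{z,t,u}` in `H1`, then the class of the associated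
basis tensor in `Λ^{S^3}_{V_2}[6]` is zero. -/
theorem stmt15 {k V : Type*} [Field k] [AddCommGroup V] [Module k V]
    (hk2 : ringChar k ≠ 2) (hk3 : ringChar k ≠ 3) (b : Module.Basis (Fin 2) k V)
    (A : Finset (Tri 6))
    (h : ∃ x y z t u : Fin 6, ({x, y, z, t, u} : Finset (Fin 6)).card = 5 ∧
      ∀ S : Tri 6,
        ((S : Finset (Fin 6)) = {x, y, z} ∨ (S : Finset (Fin 6)) = {x, y, t} ∨
          (S : Finset (Fin 6)) = {x, z, t} ∨ (S : Finset (Fin 6)) = {y, z, u} ∨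
          (S : Finset (Fin 6)) = {y, t, u} ∨ (S : Finset (Fin 6)) = {z, t, u}) →
        S ∈ A) :
    (Submodule.Quotient.mk (p := Esub k (V := V) 6)
        (PiTensorProduct.tprod k (fun S => if S ∈ A then b 0 else b 1))) = 0 := by
  obtain ⟨x, y, z, t, u, hcard, hA⟩ := h
  obtain ⟨⟨hxy, hxz, hxt, hxu⟩, ⟨hyz, hyt, hyu⟩, ⟨hzt, hzu⟩, htu⟩ := by
    simpa using (Multiset.toFinset_card_eq_card_iff_nodup (m := {x, y, z, t, u})).1
      (by simpa using hcard)
  let σ : Tri 6 := ⟨{y, z, t}, card_eq_three.2 ⟨y, z, t, hyz, hyt, hzt, rfl⟩⟩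
  have hD : #({x, y, z, t} : Finset (Fin 6)) = 4 := by simp [*]
  have hD' : #({y, z, t, u} : Finset (Fin 6)) = 4 := by simp [*]
  rw [Submodule.Quotient.mk_eq_zero]
  refine (PiTensorProduct.tprod k).map_mem_of_forall_const_on_two_blocks (Esub k 6)
    (by exact_mod_cast natCast_ne_zero_of_ringChar_ne Nat.prime_two hk2)
    (by exact_mod_cast natCast_ne_zero_of_ringChar_ne Nat.prime_three hk3)
    (T := Tri.faces {x, y, z, t}) (T' := Tri.faces {y, z, t, u}) (σ := σ)
    (by rw [Tri.card_faces, hD]; rfl) (by simp [σ])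
    (Tri.faces_inter_faces_subset σ fun m hm => by
      simp only [σ, mem_inter, mem_insert, mem_singleton] at hm ⊢; grind)
    (fun c w hw => tprod_mem_Esub_of_forall_faces hD c w hw)
    (fun c w hw => tprod_mem_Esub_of_forall_faces hD' c w hw) (e := b 0) ?_
  intro S hS hSσ
  refine if_pos (hA S ?_)
  rcases mem_union.1 hS with hS | hS
  · obtain h | h | h | h := Tri.coe_eq_of_mem_faces hxy hxz hxt hyz hyt hzt hS
    exacts [absurd (Subtype.ext h) hSσ, by simp [h], by simp [h], by simp [h]]
  · obtain h | h | h | h := Tri.coe_eq_of_mem_faces hyz hyt hyu hzt hzu htu hS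
    exacts [by simp [h], by simp [h], by simp [h], absurd (Subtype.ext h) hSσ]
end

section
/- Let V_2 be a 2-dimensional vector space over a field k with char(k) ≠ 2,3, with basis {e_1,e_2}. In the quotient Λ^{S^3}_{V_2}[4] = V_2^{⊗4}/span{u⊗u⊗u⊗u : u ∈ V_2} (positions indexed by the 3-subsets of {1,2,3,4}), the two basis tensors e_1⊗e_1⊗e_1⊗e_1 and e_2⊗e_2⊗e_2⊗e_2 map to 0, and the images of the remaining 14 basis tensors span Λ^{S^3}_{V_2}[4], satisfying exactly the three relations: the sum of all four basis tensors with three e_1's and one e_2 is 0, the sum of all four with three e_2's and one e_1 is 0, and the sum of all six with two e_1's and two e_2's is 0. -/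
open scoped TensorProduct

/-- The index type: 3-element subsets of `{1,2,3,4}`. -/
abbrev Tri4 := {S : Finset (Fin 4) // S.card = 3}

namespace Stmt19Aux

variable {k V : Type*} [Field k] [AddCommGroup V] [Module k V] (b : Module.Basis (Fin 2) k V)

noncomputable def Bfun (f : Tri4 → Fin 2) : ⨂[k] (_ : Tri4), V :=
  PiTensorProduct.tprod k (fun S => b (f S))

noncomputable def coordT (f : Tri4 → Fin 2) : (⨂[k] (_ : Tri4), V) →ₗ[k] k :=
  PiTensorProduct.lift ((MultilinearMap.mkPiAlgebra k Tri4 k).compLinearMap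
    (fun S => b.coord (f S)))

lemma coordT_tprod (f : Tri4 → Fin 2) (v : Tri4 → V) :
    coordT b f (PiTensorProduct.tprod k v) = ∏ S, b.coord (f S) (v S) := by
  simp [coordT]

lemma coordT_Bfun (f g : Tri4 → Fin 2) :
    coordT b f (Bfun b g) = if f = g then 1 else 0 := by
  rw [Bfun, coordT_tprod]
  by_cases h : f = g
  · subst h
    simp [Module.Basis.coord_apply, Module.Basis.repr_self]
  · obtain ⟨S, hS⟩ := Function.ne_iff.mp h
    rw [if_neg h]
    refine Finset.prod_eq_zero (Finset.mem_univ S) ?_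
    simp [Module.Basis.coord_apply, Module.Basis.repr_self_apply, (Ne.symm hS)]

/-- weight: number of positions equal to 1 -/
def wt (f : Tri4 → Fin 2) : ℕ := (Finset.univ.filter (fun S => f S = 1)).card

lemma wt_le (f : Tri4 → Fin 2) : wt f ≤ 4 := by
  have h := Finset.card_filter_le Finset.univ (fun S => f S = 1)
  simpa [wt, Finset.card_univ, show Fintype.card Tri4 = 4 by decide] using h

noncomputable def vnat (j : ℕ) : ⨂[k] (_ : Tri4), V :=
  ∑ f ∈ Finset.univ.filter (fun f => wt f = j), Bfun b f

noncomputable def W (x y : k) : ⨂[k] (_ : Tri4), V :=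
  ∑ j : Fin 5, (x ^ (4 - (j : ℕ)) * y ^ (j : ℕ)) • vnat b (j : ℕ)

lemma expand (v : Tri4 → V) :
    PiTensorProduct.tprod k v
      = ∑ f : Tri4 → Fin 2, (∏ S, b.repr (v S) (f S)) • Bfun b f := by
  have hv : v = fun S => ∑ i : Fin 2, b.repr (v S) i • b i := by
    funext S; rw [b.sum_repr (v S)]
  conv_lhs => rw [hv]
  rw [MultilinearMap.map_sum (PiTensorProduct.tprod k)
    (fun S (i : Fin 2) => b.repr (v S) i • b i)]
  refine Finset.sum_congr rfl fun f _ => ?_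
  rw [MultilinearMap.map_smul_univ]
  rfl

lemma prod_coeff (c : Fin 2 → k) (f : Tri4 → Fin 2) :
    (∏ S, c (f S)) = c 0 ^ (4 - wt f) * c 1 ^ (wt f) := by
  classical
  rw [← Finset.prod_filter_mul_prod_filter_not Finset.univ (fun S => f S = 1)]
  rw [mul_comm]
  congr 1
  · calc (∏ S ∈ Finset.univ.filter (fun S => ¬ f S = 1), c (f S))
        = ∏ S ∈ Finset.univ.filter (fun S => ¬ f S = 1), c 0 := by
          refine Finset.prod_congr rfl fun S hS => ?_
          have : f S = 0 := by
            have := (Finset.mem_filter.mp hS).2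
            omega
          rw [this]
      _ = c 0 ^ (4 - wt f) := by
          rw [Finset.prod_const]
          congr 1
          have h := Finset.card_filter_add_card_filter_not
            (s := Finset.univ) (p := fun S => f S = 1)
          have hcard : (Finset.univ : Finset Tri4).card = 4 := by decide
          rw [hcard] at h
          unfold wt
          omega
  · calc (∏ S ∈ Finset.univ.filter (fun S => f S = 1), c (f S))
        = ∏ S ∈ Finset.univ.filter (fun S => f S = 1), c 1 := by
          refine Finset.prod_congr rfl fun S hS => ?_
          rw [(Finset.mem_filter.mp hS).2]
      _ = c 1 ^ (wt f) := by rw [Finset.prod_const]; rfl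

lemma tprod_W (x y : k) :
    PiTensorProduct.tprod k (fun _ : Tri4 => x • b 0 + y • b 1) = W b x y := by
  classical
  have hc : ∀ i : Fin 2, b.repr (x • b 0 + y • b 1) i = ![x, y] i := by
    intro i
    fin_cases i <;>
      simp [map_add, Finsupp.single_apply, Module.Basis.repr_self]
  rw [expand]
  have h1 : ∀ f : Tri4 → Fin 2,
      (∏ S, b.repr (x • b 0 + y • b 1) (f S)) • Bfun b f
        = (x ^ (4 - wt f) * y ^ (wt f)) • Bfun b f := by
    intro f
    congr 1
    have : (∏ S, b.repr (x • b 0 + y • b 1) (f S)) = ∏ S, ![x,y] (f S) := by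
      refine Finset.prod_congr rfl fun S _ => hc (f S)
    rw [this, prod_coeff]
    simp
  rw [Finset.sum_congr rfl fun f _ => h1 f]
  rw [W]
  rw [← Finset.sum_fiberwise (Finset.univ : Finset (Tri4 → Fin 2))
    (fun f => (⟨wt f, by have := wt_le f; omega⟩ : Fin 5))
    (fun f => (x ^ (4 - wt f) * y ^ (wt f)) • Bfun b f)]
  refine Finset.sum_congr rfl fun j _ => ?_
  have hfilter : (Finset.univ.filter
        (fun f => (⟨wt f, by have := wt_le f; omega⟩ : Fin 5) = j))
      = Finset.univ.filter (fun f => wt f = (j : ℕ)) := by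
    refine Finset.filter_congr fun f _ => ?_
    simp [Fin.ext_iff]
  rw [hfilter, vnat, Finset.smul_sum]
  refine Finset.sum_congr rfl fun f hf => ?_
  rw [(Finset.mem_filter.mp hf).2]

lemma pol0 : vnat b 0 = W b 1 0 := by
  simp only [W, Fin.sum_univ_five, show ((0:Fin 5):ℕ) = 0 from rfl, show ((1:Fin 5):ℕ) = 1 from rfl, show ((2:Fin 5):ℕ) = 2 from rfl, show ((3:Fin 5):ℕ) = 3 from rfl, show ((4:Fin 5):ℕ) = 4 from rfl]
  norm_num

lemma pol4 : vnat b 4 = W b 0 1 := by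
  simp only [W, Fin.sum_univ_five, show ((0:Fin 5):ℕ) = 0 from rfl, show ((1:Fin 5):ℕ) = 1 from rfl, show ((2:Fin 5):ℕ) = 2 from rfl, show ((3:Fin 5):ℕ) = 3 from rfl, show ((4:Fin 5):ℕ) = 4 from rfl]
  norm_num

lemma pol2 : (2:k) • vnat b 2
    = W b 1 1 + W b 1 (-1) - (2:k) • W b 1 0 - (2:k) • W b 0 1 := by
  simp only [W, Fin.sum_univ_five, show ((0:Fin 5):ℕ) = 0 from rfl, show ((1:Fin 5):ℕ) = 1 from rfl, show ((2:Fin 5):ℕ) = 2 from rfl, show ((3:Fin 5):ℕ) = 3 from rfl, show ((4:Fin 5):ℕ) = 4 from rfl]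
  norm_num
  module

lemma pol1 : (6:k) • vnat b 1
    = W b 2 1 - (3:k) • W b 1 1 - W b 1 (-1) - (12:k) • W b 1 0 + (3:k) • W b 0 1 := by
  simp only [W, Fin.sum_univ_five, show ((0:Fin 5):ℕ) = 0 from rfl, show ((1:Fin 5):ℕ) = 1 from rfl, show ((2:Fin 5):ℕ) = 2 from rfl, show ((3:Fin 5):ℕ) = 3 from rfl, show ((4:Fin 5):ℕ) = 4 from rfl]
  norm_num
  module

lemma pol3 : (6:k) • vnat b 3
    = W b 1 2 - (3:k) • W b 1 1 - W b 1 (-1) + (3:k) • W b 1 0 - (12:k) • W b 0 1 := by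
  simp only [W, Fin.sum_univ_five, show ((0:Fin 5):ℕ) = 0 from rfl, show ((1:Fin 5):ℕ) = 1 from rfl, show ((2:Fin 5):ℕ) = 2 from rfl, show ((3:Fin 5):ℕ) = 3 from rfl, show ((4:Fin 5):ℕ) = 4 from rfl]
  norm_num
  module

def ind (A : Finset Tri4) : Tri4 → Fin 2 := fun S => if S ∈ A then 1 else 0

lemma fin2_cases : ∀ x : Fin 2, x ≠ 1 → x = 0 := by decide

lemma filter_ind (A : Finset Tri4) :
    Finset.univ.filter (fun S => ind A S = 1) = A := by
  ext S
  by_cases h : S ∈ A <;> simp [ind, h]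

lemma wt_ind (A : Finset Tri4) : wt (ind A) = A.card := by
  rw [wt, filter_ind]

lemma ind_filter (f : Tri4 → Fin 2) :
    ind (Finset.univ.filter (fun S => f S = 1)) = f := by
  funext S
  by_cases h : f S = 1
  · simp [ind, h]
  · simp [ind, h, fin2_cases _ h]

lemma sumInd (j : ℕ) :
    ∑ A ∈ Finset.univ.filter (fun A : Finset Tri4 => A.card = j), Bfun b (ind A)
      = vnat b j := by
  rw [vnat]
  refine Finset.sum_nbij (i := ind) ?_ ?_ ?_ ?_
  · intro A hA
    simp only [Finset.mem_filter, Finset.mem_univ, true_and] at hA ⊢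
    rw [wt_ind, hA]
  · intro A hA A' hA' h
    rw [← filter_ind A, ← filter_ind A', h]
  · intro f hf
    simp only [Finset.coe_filter, Finset.mem_univ, true_and, Set.mem_image,
      Set.mem_setOf_eq] at hf ⊢
    exact ⟨Finset.univ.filter (fun S => f S = 1), hf, ind_filter f⟩
  · intro A _
    rfl

end Stmt19Aux

namespace Stmt19Aux
variable {k V : Type*} [Field k] [AddCommGroup V] [Module k V] (b : Module.Basis (Fin 2) k V)

lemma indep_B : LinearIndependent k (Bfun b) := by
  rw [Fintype.linearIndependent_iff]
  intro c hc f
  have h := congrArg (coordT b f) hc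
  simpa [map_sum, map_smul, coordT_Bfun, mul_ite, Finset.sum_ite_eq] using h

lemma span_B : ⊤ ≤ Submodule.span k (Set.range (Bfun b)) := by
  rw [← PiTensorProduct.span_tprod_eq_top (R := k) (s := fun _ : Tri4 => V)]
  rw [Submodule.span_le]
  rintro _ ⟨v, rfl⟩
  rw [expand b v]
  exact Submodule.sum_mem _ fun f _ =>
    Submodule.smul_mem _ _ (Submodule.subset_span ⟨f, rfl⟩)

noncomputable def basisB : Module.Basis (Tri4 → Fin 2) k (⨂[k] (_ : Tri4), V) :=
  Module.Basis.mk (indep_B b) (span_B b)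

lemma finrank_T (bb : Module.Basis (Fin 2) k V) :
    Module.finrank k (⨂[k] (_ : Tri4), V) = 16 := by
  have := Module.Finite.of_basis (basisB bb)
  rw [Module.finrank_eq_card_basis (basisB bb)]
  rw [Fintype.card_fun]
  decide

lemma coordT_vnat (f : Tri4 → Fin 2) (j : ℕ) :
    coordT b f (vnat b j) = if wt f = j then 1 else 0 := by
  rw [vnat, map_sum]
  have h : ∀ g ∈ Finset.univ.filter (fun g => wt g = j),
      coordT b f (Bfun b g) = if f = g then 1 else 0 :=
    fun g _ => coordT_Bfun b f g
  rw [Finset.sum_congr rfl h, Finset.sum_ite_eq]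
  simp

lemma indep_v : LinearIndependent k (fun j : Fin 5 => vnat b (j : ℕ)) := by
  rw [Fintype.linearIndependent_iff]
  intro c hc j
  obtain ⟨A, -, hA⟩ := Finset.exists_subset_card_eq
    (s := (Finset.univ : Finset Tri4)) (n := (j : ℕ))
    (by rw [Finset.card_univ]; have := j.isLt
        have h4 : Fintype.card Tri4 = 4 := by decide
        omega)
  have h := congrArg (coordT b (ind A)) hc
  rw [map_sum, map_zero] at h
  have h2 : ∀ j' : Fin 5,
      coordT b (ind A) (c j' • vnat b (j' : ℕ)) = if j = j' then c j' else 0 := by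
    intro j'
    rw [map_smul, coordT_vnat, wt_ind, hA]
    by_cases hjj : j = j'
    · simp [hjj]
    · have : (j : ℕ) ≠ (j' : ℕ) := fun hh => hjj (Fin.ext hh)
      simp [this, hjj]
  rw [Finset.sum_congr rfl (fun j' _ => h2 j'), Finset.sum_ite_eq] at h
  simpa using h

end Stmt19Aux


open Stmt19Aux

/-- In `Λ^{S^3}_{V_2}[4] = V_2^{⊗4}/span{u⊗u⊗u⊗u}`, the two pure basis tensors
vanish, the images of the remaining 14 basis tensors span the quotient, the
symmetric sums with three `e_1`'s and one `e_2`, three `e_2`'s and one `e_1`, and two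
of each vanish, and these are exactly the relations: the quotient has dimension
`16 - 5 = 11`. -/
theorem stmt19 {k V : Type*} [Field k] [AddCommGroup V] [Module k V]
    (hk2 : ringChar k ≠ 2) (hk3 : ringChar k ≠ 3) (b : Module.Basis (Fin 2) k V) :
    let Esub : Submodule k (⨂[k] (_ : Tri4), V) :=
      Submodule.span k {w | ∃ u : V, w = PiTensorProduct.tprod k (fun _ => u)}
    let mk : (⨂[k] (_ : Tri4), V) → (⨂[k] (_ : Tri4), V) ⧸ Esub :=
      Submodule.Quotient.mk
    (mk (PiTensorProduct.tprod k (fun _ => b 0)) = 0) ∧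
    (mk (PiTensorProduct.tprod k (fun _ => b 1)) = 0) ∧
    (Submodule.span k
        (mk '' {w | ∃ f : Tri4 → Fin 2, (∃ S S', f S ≠ f S') ∧
          w = PiTensorProduct.tprod k (fun S => b (f S))}) = ⊤) ∧
    (∑ S0 : Tri4,
        mk (PiTensorProduct.tprod k (fun S => if S = S0 then b 1 else b 0)) = 0) ∧
    (∑ S0 : Tri4,
        mk (PiTensorProduct.tprod k (fun S => if S = S0 then b 0 else b 1)) = 0) ∧
    (∑ A ∈ Finset.univ.filter (fun A : Finset Tri4 => A.card = 2),
        mk (PiTensorProduct.tprod k (fun S => if S ∈ A then b 1 else b 0)) = 0) ∧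
    Module.finrank k ((⨂[k] (_ : Tri4), V) ⧸ Esub) = 11 := by
  intro Esub mk
  classical
  have hWmem : ∀ x y : k, W b x y ∈ Esub := fun x y =>
    Submodule.subset_span ⟨x • b 0 + y • b 1, (tprod_W b x y).symm⟩
  have two_ne : (2 : k) ≠ 0 := Ring.two_ne_zero hk2
  have three_ne : (3 : k) ≠ 0 := fun h =>
    hk3 (CharP.ringChar_of_prime_eq_zero (by norm_num) (by exact_mod_cast h))
  have six_ne : (6 : k) ≠ 0 := by
    have h6 : (6 : k) = 2 * 3 := by norm_num
    rw [h6]; exact mul_ne_zero two_ne three_ne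
  have hv0 : vnat b 0 ∈ Esub := by rw [pol0 b]; exact hWmem 1 0
  have hv4 : vnat b 4 ∈ Esub := by rw [pol4 b]; exact hWmem 0 1
  have hv2 : vnat b 2 ∈ Esub := by
    refine (Submodule.smul_mem_iff Esub two_ne).mp ?_
    rw [pol2 b]
    exact sub_mem (sub_mem (add_mem (hWmem 1 1) (hWmem 1 (-1)))
      (Submodule.smul_mem _ _ (hWmem 1 0))) (Submodule.smul_mem _ _ (hWmem 0 1))
  have hv1 : vnat b 1 ∈ Esub := by
    refine (Submodule.smul_mem_iff Esub six_ne).mp ?_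
    rw [pol1 b]
    exact add_mem (sub_mem (sub_mem (sub_mem (hWmem 2 1)
      (Submodule.smul_mem _ _ (hWmem 1 1))) (hWmem 1 (-1)))
      (Submodule.smul_mem _ _ (hWmem 1 0))) (Submodule.smul_mem _ _ (hWmem 0 1))
  have hv3 : vnat b 3 ∈ Esub := by
    refine (Submodule.smul_mem_iff Esub six_ne).mp ?_
    rw [pol3 b]
    exact sub_mem (add_mem (sub_mem (sub_mem (hWmem 1 2)
      (Submodule.smul_mem _ _ (hWmem 1 1))) (hWmem 1 (-1)))
      (Submodule.smul_mem _ _ (hWmem 1 0))) (Submodule.smul_mem _ _ (hWmem 0 1))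
  refine ⟨?_, ?_, ?_, ?_, ?_, ?_, ?_⟩
  · exact (Submodule.Quotient.mk_eq_zero Esub).mpr (Submodule.subset_span ⟨b 0, rfl⟩)
  · exact (Submodule.Quotient.mk_eq_zero Esub).mpr (Submodule.subset_span ⟨b 1, rfl⟩)
  · -- spanning
    apply top_unique
    have hspan : Submodule.span k (Set.range (Bfun b)) = ⊤ :=
      le_antisymm le_top (span_B b)
    have h1 : (⊤ : Submodule k ((⨂[k] (_ : Tri4), V) ⧸ Esub))
        = Submodule.map Esub.mkQ (Submodule.span k (Set.range (Bfun b))) := by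
      rw [hspan, Submodule.map_top, Submodule.range_mkQ]
    rw [h1, ← Submodule.span_image]
    apply Submodule.span_le.mpr
    rintro z ⟨w, ⟨g, rfl⟩, rfl⟩
    by_cases hg : ∃ S S', g S ≠ g S'
    · exact Submodule.subset_span ⟨Bfun b g, ⟨g, hg, rfl⟩, rfl⟩
    · push_neg at hg
      have hS : Bfun b g
          = PiTensorProduct.tprod k (fun _ => b (g ⟨{0,1,2}, by decide⟩)) := by
        unfold Bfun; congr 1; funext S; rw [hg S _]
      have hz : Esub.mkQ (Bfun b g) = 0 := by
        rw [Submodule.mkQ_apply, Submodule.Quotient.mk_eq_zero]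
        exact Submodule.subset_span ⟨_, hS⟩
      rw [hz]
      exact zero_mem _
  · -- sum with one b1
    have hterm : ∀ S0 : Tri4,
        mk (PiTensorProduct.tprod k (fun S => if S = S0 then b 1 else b 0))
          = Esub.mkQ (Bfun b (ind {S0})) := by
      intro S0
      refine congrArg mk (congrArg _ (funext fun S => ?_))
      by_cases h : S = S0 <;> simp [ind, h]
    simp only [hterm]
    rw [← map_sum]
    have hsum : (∑ S0 : Tri4, Bfun b (ind {S0})) = vnat b 1 := by
      rw [← sumInd b 1]
      refine Finset.sum_bij (i := fun S0 _ => ({S0} : Finset Tri4)) ?_ ?_ ?_ ?_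
      · intro S0 _; simp
      · intro S0 _ S0' _ h; exact Finset.singleton_inj.mp h
      · intro A hA
        simp only [Finset.mem_filter] at hA
        obtain ⟨S0, rfl⟩ := Finset.card_eq_one.mp hA.2
        exact ⟨S0, Finset.mem_univ _, rfl⟩
      · intro S0 _; rfl
    rw [hsum, Submodule.mkQ_apply, Submodule.Quotient.mk_eq_zero]
    exact hv1
  · -- sum with one b0
    have hterm : ∀ S0 : Tri4,
        mk (PiTensorProduct.tprod k (fun S => if S = S0 then b 0 else b 1))
          = Esub.mkQ (Bfun b (ind ({S0}ᶜ))) := by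
      intro S0
      refine congrArg mk (congrArg _ (funext fun S => ?_))
      by_cases h : S = S0 <;> simp [ind, h]
    simp only [hterm]
    rw [← map_sum]
    have hsum : (∑ S0 : Tri4, Bfun b (ind ({S0}ᶜ))) = vnat b 3 := by
      rw [← sumInd b 3]
      refine Finset.sum_bij (i := fun S0 _ => (({S0}ᶜ : Finset Tri4))) ?_ ?_ ?_ ?_
      · intro S0 _
        simp [Finset.card_compl, show Fintype.card Tri4 = 4 by decide]
      · intro S0 _ S0' _ h
        have h2 := congrArg (·ᶜ) h
        simp only [compl_compl] at h2
        exact Finset.singleton_inj.mp h2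
      · intro A hA
        simp only [Finset.mem_filter] at hA
        have hAc : Aᶜ.card = 1 := by
          rw [Finset.card_compl, hA.2, show Fintype.card Tri4 = 4 by decide]
        obtain ⟨S0, hS0⟩ := Finset.card_eq_one.mp hAc
        exact ⟨S0, Finset.mem_univ _, by show ({S0}ᶜ : Finset Tri4) = A; rw [← hS0, compl_compl]⟩
      · intro S0 _; rfl
    rw [hsum, Submodule.mkQ_apply, Submodule.Quotient.mk_eq_zero]
    exact hv3
  · -- sum with two b1
    have hterm : ∀ A : Finset Tri4,
        mk (PiTensorProduct.tprod k (fun S => if S ∈ A then b 1 else b 0))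
          = Esub.mkQ (Bfun b (ind A)) := by
      intro A
      refine congrArg mk (congrArg _ (funext fun S => ?_))
      by_cases h : S ∈ A <;> simp [ind, h]
    simp only [hterm]
    rw [← map_sum, sumInd b 2, Submodule.mkQ_apply, Submodule.Quotient.mk_eq_zero]
    exact hv2
  · -- dimension
    have hEsub : Esub = Submodule.span k (Set.range fun j : Fin 5 => vnat b (j : ℕ)) := by
      apply le_antisymm
      · show Submodule.span k {w | ∃ u : V, w = PiTensorProduct.tprod k (fun _ => u)} ≤ _
        apply Submodule.span_le.mpr
        rintro w ⟨u, rfl⟩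
        have hu : (fun _ : Tri4 => u)
            = fun _ : Tri4 => b.repr u 0 • b 0 + b.repr u 1 • b 1 := by
          funext _
          have h := b.sum_repr u
          rw [Fin.sum_univ_two] at h
          exact h.symm
        rw [hu, tprod_W, W]
        exact Submodule.sum_mem _ fun j _ =>
          Submodule.smul_mem _ _ (Submodule.subset_span ⟨j, rfl⟩)
      · apply Submodule.span_le.mpr
        rintro w ⟨j, rfl⟩
        fin_cases j
        exacts [hv0, hv1, hv2, hv3, hv4]
    haveI : Module.Finite k (⨂[k] (_ : Tri4), V) :=
      Module.Finite.of_basis (basisB b)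
    have hq := Submodule.finrank_quotient_add_finrank Esub
    rw [finrank_T b] at hq
    have h5 : Module.finrank k Esub = 5 := by
      rw [hEsub, finrank_span_eq_card (indep_v b)]
      simp
    omega
end
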